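/- Let A be a k-algebra, let s : H_q⊗A → A⊗H_q be a good left transposition with associated algebra automorphism α (so s(D_1⊗a) = α(a)⊗D_1, s(D_2⊗a) = α^{-1}(a)⊗D_2), and let ς, δ_1, δ_2 : A → A be k-linear maps satisfying: ς bijective, δ_1∘δ_2 = δ_2∘δ_1, qς∘δ_i = δ_i∘ς (i = 1,2), and δ_1^l = δ_2^l = 0 if q ≠ 1 and q^l = 1, so that there is a left H_q-action ρ on A with σ·a = ς(a) and D_i·a = δ_i(a). Then (A,s) is a left H_q-braided module algebra via ρ if and only if: (5) ς is an algebra automorphism; (6) α∘δ_i = δ_i∘α for i = 1,2; (7) α∘ς = ς∘α; (8) δ_i(1) = 0 for i = 1,2; (9) δ_1(ab) = δ_1(a)ς(b) + α(a)δ_1(b) for all a,b ∈ A; and (10) δ_2(ab) = δ_2(a)b + ς(α^{-1}(a))δ_2(b) for all a,b ∈ A. -/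

import Mathlib

open TensorProduct

noncomputable section
namespace Paper

variable {k : Type*} [Field k]

section Combinators

variable {M N P Q M' N' P' M'' : Type*}
  [AddCommMonoid M] [AddCommMonoid N] [AddCommMonoid P] [AddCommMonoid Q]
  [AddCommMonoid M'] [AddCommMonoid N'] [AddCommMonoid P'] [AddCommMonoid M'']
  [Module k M] [Module k N] [Module k P] [Module k Q]
  [Module k M'] [Module k N'] [Module k P'] [Module k M'']

/-- `(s ⊗ id) ∘ (id ⊗ s)` : braid a pair of factors past `P`. -/
def braidPast (f : N ⊗[k] P →ₗ[k] P ⊗[k] N') (g : M ⊗[k] P →ₗ[k] P ⊗[k] M') :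
    (M ⊗[k] N) ⊗[k] P →ₗ[k] P ⊗[k] (M' ⊗[k] N') :=
  (TensorProduct.assoc k P M' N').toLinearMap
    ∘ₗ g.rTensor N'
    ∘ₗ (TensorProduct.assoc k M P N').symm.toLinearMap
    ∘ₗ f.lTensor M
    ∘ₗ (TensorProduct.assoc k M N P).toLinearMap

def braidUnder (f : M ⊗[k] N →ₗ[k] N' ⊗[k] M') (g : M' ⊗[k] P →ₗ[k] P' ⊗[k] M'') :
    M ⊗[k] (N ⊗[k] P) →ₗ[k] (N' ⊗[k] P') ⊗[k] M'' :=
  (TensorProduct.assoc k N' P' M'').symm.toLinearMap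
    ∘ₗ g.lTensor N'
    ∘ₗ (TensorProduct.assoc k N' M' P).toLinearMap
    ∘ₗ f.rTensor P
    ∘ₗ (TensorProduct.assoc k M N P).symm.toLinearMap

def midMap (f : N ⊗[k] P →ₗ[k] P' ⊗[k] N') :
    (M ⊗[k] N) ⊗[k] (P ⊗[k] Q) →ₗ[k] (M ⊗[k] P') ⊗[k] (N' ⊗[k] Q) :=
  (TensorProduct.assoc k M P' (N' ⊗[k] Q)).symm.toLinearMap
    ∘ₗ ((TensorProduct.assoc k P' N' Q).toLinearMap.lTensor M)
    ∘ₗ ((f.rTensor Q).lTensor M)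
    ∘ₗ ((TensorProduct.assoc k N P Q).symm.toLinearMap.lTensor M)
    ∘ₗ (TensorProduct.assoc k M N (P ⊗[k] Q)).toLinearMap

end Combinators

section Hq

variable (k)
variable (H : Type*) [Ring H]

/-- Axiomatisation of the Hopf algebra `H_q`. -/
structure HqData [HopfAlgebra k H] (q : k) where
  D₁ : H
  D₂ : H
  σ : Hˣ
  D_comm : D₁ * D₂ = D₂ * D₁
  σD₁ : q • ((σ : H) * D₁) = D₁ * (σ : H)
  σD₂ : q • ((σ : H) * D₂) = D₂ * (σ : H)
  comul_D₁ : Coalgebra.comul (R := k) D₁ = D₁ ⊗ₜ[k] (σ : H) + 1 ⊗ₜ[k] D₁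
  comul_D₂ : Coalgebra.comul (R := k) D₂ = D₂ ⊗ₜ[k] (1 : H) + (σ : H) ⊗ₜ[k] D₂
  comul_σ : Coalgebra.comul (R := k) ((σ : H)) = (σ : H) ⊗ₜ[k] (σ : H)
  counit_D₁ : Coalgebra.counit (R := k) D₁ = 0
  counit_D₂ : Coalgebra.counit (R := k) D₂ = 0
  counit_σ : Coalgebra.counit (R := k) ((σ : H)) = 1
  basis_generic : (∀ l : ℕ, 2 ≤ l → ¬ IsPrimitiveRoot q l) →
      ∃ b : Module.Basis (ℤ × ℕ × ℕ) k H,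
        ∀ i j m, b (i, j, m) = ((σ ^ i : Hˣ) : H) * D₁ ^ j * D₂ ^ m
  basis_root : ∀ l : ℕ, 2 ≤ l → IsPrimitiveRoot q l →
      D₁ ^ l = 0 ∧ D₂ ^ l = 0 ∧
      ∃ b : Module.Basis (ℤ × Fin l × Fin l) k H,
        ∀ i j m, b (i, j, m) = ((σ ^ i : Hˣ) : H) * D₁ ^ (j : ℕ) * D₂ ^ (m : ℕ)

variable (A : Type*) [Ring A] [Algebra k A]

/-- A left transposition of a (standard, flip-braided) bialgebra `H` on an algebra `A`. -/
structure IsTransposition [HopfAlgebra k H] (s : H ⊗[k] A ≃ₗ[k] A ⊗[k] H) : Prop where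
  unit_H : ∀ a : A, s ((1 : H) ⊗ₜ[k] a) = a ⊗ₜ[k] (1 : H)
  mul_H : s.toLinearMap ∘ₗ (LinearMap.mul' k H).rTensor A
      = (LinearMap.mul' k H).lTensor A ∘ₗ braidPast s.toLinearMap s.toLinearMap
  counit_compat : (TensorProduct.rid k A).toLinearMap
        ∘ₗ (Coalgebra.counit (R := k) (A := H)).lTensor A ∘ₗ s.toLinearMap
      = (TensorProduct.lid k A).toLinearMap ∘ₗ (Coalgebra.counit (R := k) (A := H)).rTensor A
  comul_compat : (Coalgebra.comul (R := k) (A := H)).lTensor A ∘ₗ s.toLinearMap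
      = braidPast s.toLinearMap s.toLinearMap ∘ₗ (Coalgebra.comul (R := k) (A := H)).rTensor A
  unit_A : ∀ h : H, s (h ⊗ₜ[k] (1 : A)) = (1 : A) ⊗ₜ[k] h
  mul_A : s.toLinearMap ∘ₗ (LinearMap.mul' k A).lTensor H
      = (LinearMap.mul' k A).rTensor H ∘ₗ braidUnder s.toLinearMap s.toLinearMap
  braid_compat : braidPast s.toLinearMap s.toLinearMap
        ∘ₗ (TensorProduct.comm k H H).toLinearMap.rTensor A
      = (TensorProduct.comm k H H).toLinearMap.lTensor A
        ∘ₗ braidPast s.toLinearMap s.toLinearMap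

/-- The action `H ⊗ A → A` attached to an algebra morphism `H →ₐ Module.End k A`. -/
def actMap [HopfAlgebra k H] (ρ : H →ₐ[k] Module.End k A) : H ⊗[k] A →ₗ[k] A :=
  TensorProduct.lift ρ.toLinearMap

/-- `(A, s)` is a left `H`-braided module algebra via the action `ρ`
(braid of `H` = flip). -/
structure IsModuleAlgebra [HopfAlgebra k H] (s : H ⊗[k] A ≃ₗ[k] A ⊗[k] H)
    (ρ : H →ₐ[k] Module.End k A) : Prop where
  compat_s : s.toLinearMap ∘ₗ (actMap k H A ρ).lTensor H
        ∘ₗ (TensorProduct.assoc k H H A).toLinearMap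
      = (actMap k H A ρ).rTensor H
        ∘ₗ (TensorProduct.assoc k H A H).symm.toLinearMap
        ∘ₗ s.toLinearMap.lTensor H
        ∘ₗ (TensorProduct.assoc k H H A).toLinearMap
        ∘ₗ (TensorProduct.comm k H H).toLinearMap.rTensor A
  mul_act : ∀ (h : H) (a b : A), ρ h (a * b)
      = (LinearMap.mul' k A
          ∘ₗ TensorProduct.map (actMap k H A ρ) (actMap k H A ρ)
          ∘ₗ midMap s.toLinearMap)
        ((Coalgebra.comul (R := k) h) ⊗ₜ[k] (a ⊗ₜ[k] b))
  one_act : ∀ h : H, ρ h (1 : A) = Coalgebra.counit (R := k) h • (1 : A)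

/-- `s` is a *good* transposition. -/
def GoodTransposition {q : k} [HopfAlgebra k H] (hq : HqData k H q)
    (s : H ⊗[k] A ≃ₗ[k] A ⊗[k] H) : Prop :=
  ∀ a : A, braidPast s.toLinearMap s.toLinearMap ((hq.D₁ ⊗ₜ[k] hq.D₂) ⊗ₜ[k] a)
    = a ⊗ₜ[k] (hq.D₁ ⊗ₜ[k] hq.D₂)

end Hq


section Crossed

variable {G : Type*} [Group G] {V : Type*} [AddCommGroup V] [Module k V]

variable (G) in
/-- `f` is a normal 2-cocycle on `G` with values in `kˣ`. -/
structure IsCocycle (f : G → G → kˣ) : Prop where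
  one_left : ∀ g, f 1 g = 1
  one_right : ∀ g, f g 1 = 1
  cocycle : ∀ g h l, f g h * f (g * h) l = f g (h * l) * f h l

variable (A : Type*) [Ring A] [Algebra k A]

/-- Axiomatisation of the crossed product `S(V) #_f G`:  `A` is generated by a copy of `V`
(with commuting elements, generating a copy of the symmetric algebra) and elements `w g`,
and is free as a module over the symmetric part with basis `{w g}`. -/
structure CrossedProduct (ρV : Representation k G V) (f : G → G → kˣ) where
  ι : V →ₗ[k] A
  w : G → A
  w_one : w 1 = 1
  ι_comm : ∀ v v', ι v * ι v' = ι v' * ι v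
  w_ι : ∀ g v, w g * ι v = ι (ρV g v) * w g
  w_mul : ∀ g h, w g * w h = (f g h : k) • w (g * h)
  isBasis : ∀ {n : ℕ} (bV : Module.Basis (Fin n) k V),
      ∃ bA : Module.Basis ((Fin n → ℕ) × G) k A,
        ∀ d g, bA (d, g) = (List.ofFn fun i => ι (bV i) ^ d i).prod * w g

namespace CrossedProduct

variable {A} {ρV : Representation k G V} {f : G → G → kˣ}

/-- The product in `A` of the images of a list of elements of `V`. -/
def mon (cp : CrossedProduct A ρV f) (l : List V) : A := (l.map cp.ι).prod

/-- `v₁ ⋯ v_{j-1}` : the image of the prefix of a monomial. -/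
def pre (cp : CrossedProduct A ρV f) {m : ℕ} (v : Fin m → V) (j : Fin m) : A :=
  cp.mon ((List.ofFn v).take j)

/-- `v_{j+1} ⋯ v_m` : the image of the suffix of a monomial. -/
def suf (cp : CrossedProduct A ρV f) {m : ℕ} (v : Fin m → V) (j : Fin m) : A :=
  cp.mon ((List.ofFn v).drop (j + 1))

/-- The subalgebra `S(V)` of the crossed product. -/
def SV (cp : CrossedProduct A ρV f) : Subalgebra k A :=
  Algebra.adjoin k (Set.range cp.ι)

/-- The subalgebra `S(W)` of the crossed product, for a subspace `W ≤ V`. -/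
def SW (cp : CrossedProduct A ρV f) (W : Submodule k V) : Subalgebra k A :=
  Algebra.adjoin k (cp.ι '' (W : Set V))

end CrossedProduct

/-- A linear endomorphism of `V` is `k[G]`-linear if it commutes with the `G`-action. -/
def GLinear (ρV : Representation k G V) (φ : V →ₗ[k] V) : Prop :=
  ∀ g v, φ (ρV g v) = ρV g (φ v)

variable (G) in
/-- `χ : G → kˣ` is a group homomorphism. -/
def IsCharacter (χ : G → kˣ) : Prop := ∀ g h, χ (g * h) = χ g * χ h

section Defs

variable {H : Type*} [Ring H] [HopfAlgebra k H] {q : k}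
variable {ρV : Representation k G V} {f : G → G → kˣ}

/-- `s` is the (good) transposition of `H_q` on `A` associated with the automorphism `α`. -/
def AssocTransposition (hq : HqData k H q)
    (s : H ⊗[k] A ≃ₗ[k] A ⊗[k] H) (α : A ≃ₐ[k] A) : Prop :=
  IsTransposition k H A s ∧ GoodTransposition k H A hq s
    ∧ (∀ a : A, s (hq.D₁ ⊗ₜ[k] a) = α a ⊗ₜ[k] hq.D₁)
    ∧ (∀ a : A, s (hq.D₂ ⊗ₜ[k] a) = α.symm a ⊗ₜ[k] hq.D₂)

variable {A}

/-- `ς` is the endomorphism of `A` determined by `ς̂` and `χ_ς`. -/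
def SigmaDef (cp : CrossedProduct A ρV f) (ςhat : V →ₗ[k] V) (χς : G → kˣ)
    (ς : Module.End k A) : Prop :=
  ∀ (m : ℕ) (v : Fin m → V) (g : G),
    ς (cp.mon (List.ofFn v) * cp.w g)
      = (χς g : k) • (cp.mon (List.ofFn fun i => ςhat (v i)) * cp.w g)

/-- `δ₁` is determined by `δ̂₁`, `δ̄₁` via the `(α, ς)`-twisted Leibniz formula. -/
def Delta1Def (cp : CrossedProduct A ρV f) (α : A ≃ₐ[k] A) (ς : Module.End k A)
    (δhat : V →ₗ[k] A) (δbar : G → A) (δ : Module.End k A) : Prop :=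
  ∀ (m : ℕ) (v : Fin m → V) (g : G),
    δ (cp.mon (List.ofFn v) * cp.w g)
      = (∑ j : Fin m, α (cp.pre v j) * δhat (v j) * ς (cp.suf v j * cp.w g))
        + α (cp.mon (List.ofFn v)) * δbar g

/-- `δ₂` is determined by `δ̂₂`, `δ̄₂` via the `(ς ∘ α⁻¹, id)`-twisted Leibniz formula. -/
def Delta2Def (cp : CrossedProduct A ρV f) (α : A ≃ₐ[k] A) (ς : Module.End k A)
    (δhat : V →ₗ[k] A) (δbar : G → A) (δ : Module.End k A) : Prop :=
  ∀ (m : ℕ) (v : Fin m → V) (g : G),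
    δ (cp.mon (List.ofFn v) * cp.w g)
      = (∑ j : Fin m, ς (α.symm (cp.pre v j)) * δhat (v j) * (cp.suf v j * cp.w g))
        + ς (α.symm (cp.mon (List.ofFn v))) * δbar g

/-- There is an `H_q`-braided module algebra structure on `(A, s)` with the
prescribed values of the action on `V` and on the `w_g`. -/
def HasHqModuleStructure (hq : HqData k H q) (cp : CrossedProduct A ρV f)
    (s : H ⊗[k] A ≃ₗ[k] A ⊗[k] H) (ςhat : V →ₗ[k] V) (χς : G → kˣ)
    (δhat1 δhat2 : V →ₗ[k] A) (δbar1 δbar2 : G → A) : Prop :=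
  ∃ ρ : H →ₐ[k] Module.End k A, IsModuleAlgebra k H A s ρ
    ∧ (∀ v : V, ρ (hq.σ : H) (cp.ι v) = cp.ι (ςhat v))
    ∧ (∀ g : G, ρ (hq.σ : H) (cp.w g) = (χς g : k) • cp.w g)
    ∧ (∀ v : V, ρ hq.D₁ (cp.ι v) = δhat1 v)
    ∧ (∀ g : G, ρ hq.D₁ (cp.w g) = δbar1 g)
    ∧ (∀ v : V, ρ hq.D₂ (cp.ι v) = δhat2 v)
    ∧ (∀ g : G, ρ hq.D₂ (cp.w g) = δbar2 g)

end Defs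

end Crossed

end Paper

/-! `H_q` is generated as an algebra by `σ`, `σ⁻¹`, `D₁`, `D₂` (it has a PBW basis), and each of
the three axioms of a braided module algebra cuts out a subalgebra of `H_q`: the elements `h`
with `h · 1 = ε(h) 1`, the elements over which `s` commutes with a given endomorphism of `A`, and,
once the action commutes with `s`, the elements acting on products by the twisted Leibniz rule.
So every axiom holds as soon as it holds on the generators, where it becomes one of (5)–(10).
Commuting with `s` over `D₁` and `D₂` means commuting with `α`, and over `σ^{±1}` it is
automatic: comparing the `D₁ ⊗ σ` components of the comultiplicativity of `s` on `D₁ ⊗ a`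
forces `s (σ ⊗ a) = a ⊗ σ`. -/

namespace Paper

open TensorProduct LinearMap

section VectorSpace

variable {k : Type*} [Field k] {M N : Type*} [AddCommGroup M] [Module k M]
  [AddCommGroup N] [Module k N]

lemma tmul_left_injective {n : N} (hn : n ≠ 0) :
    Function.Injective (fun m : M => m ⊗ₜ[k] n) := by
  obtain ⟨f, hf⟩ := Module.Projective.exists_dual_eq_one k hn
  intro x y hxy
  simpa [hf] using congrArg (fun t => TensorProduct.rid k M (f.lTensor M t)) hxy

end VectorSpace

section Braiding

variable {k : Type*} [Field k] {M N P M' : Type*} [AddCommGroup M] [AddCommGroup N]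
  [AddCommGroup P] [AddCommGroup M'] [Module k M] [Module k N] [Module k P] [Module k M']

def braidPastLeft (g : M ⊗[k] P →ₗ[k] P ⊗[k] M') (x : M) :
    P ⊗[k] N →ₗ[k] P ⊗[k] (M' ⊗[k] N) :=
  (TensorProduct.assoc k P M' N).toLinearMap ∘ₗ (g ∘ₗ TensorProduct.mk k M P x).rTensor N

@[simp]
lemma braidPastLeft_tmul (g : M ⊗[k] P →ₗ[k] P ⊗[k] M') (x : M) (p : P) (n : N) :
    braidPastLeft g x (p ⊗ₜ[k] n)
      = TensorProduct.assoc k P M' N (g (x ⊗ₜ[k] p) ⊗ₜ[k] n) :=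
  rfl

lemma braidPastLeft_injective (g : M ⊗[k] P →ₗ[k] P ⊗[k] M') (x : M)
    (hx : Function.Injective (g ∘ₗ TensorProduct.mk k M P x)) :
    Function.Injective (braidPastLeft (N := N) g x) :=
  (TensorProduct.assoc k P M' N).injective.comp
    (Module.Flat.rTensor_preserves_injective_linearMap _ hx)

lemma braidPast_tmul {N' : Type*} [AddCommGroup N'] [Module k N']
    (f : N ⊗[k] P →ₗ[k] P ⊗[k] N') (g : M ⊗[k] P →ₗ[k] P ⊗[k] M')
    (x : M) (y : N) (p : P) :
    braidPast f g ((x ⊗ₜ[k] y) ⊗ₜ[k] p) = braidPastLeft g x (f (y ⊗ₜ[k] p)) := by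
  simp only [braidPast, coe_comp, LinearEquiv.coe_coe, Function.comp_apply, assoc_tmul,
    lTensor_tmul]
  generalize f (y ⊗ₜ[k] p) = t
  induction t using TensorProduct.induction_on with
  | zero => simp
  | tmul c d => simp
  | add u v hu hv => simp only [tmul_add, map_add, hu, hv]

end Braiding

section Transposition

variable {k : Type*} [Field k] {H : Type*} [Ring H] {A : Type*} [Ring A] [Algebra k A]

lemma mul'_lTensor_braidPastLeft_tmul [Algebra k H] (S : H ⊗[k] A →ₗ[k] A ⊗[k] H)
    (x : H) (c : A) (d : H) :
    (mul' k H).lTensor A (braidPastLeft S x (c ⊗ₜ[k] d))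
      = (mulRight k d).lTensor A (S (x ⊗ₜ[k] c)) := by
  rw [braidPastLeft_tmul]
  induction S (x ⊗ₜ[k] c) using TensorProduct.induction_on with
  | zero => simp
  | tmul a e => simp
  | add u v hu hv => simp only [add_tmul, map_add, hu, hv]

variable [HopfAlgebra k H] {s : H ⊗[k] A ≃ₗ[k] A ⊗[k] H}

lemma IsTransposition.apply_mul_tmul (hs : IsTransposition k H A s) (x y : H) (a : A) :
    s ((x * y) ⊗ₜ[k] a)
      = (mul' k H).lTensor A (braidPastLeft s.toLinearMap x (s (y ⊗ₜ[k] a))) := by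
  simpa [braidPast_tmul] using LinearMap.congr_fun hs.mul_H ((x ⊗ₜ[k] y) ⊗ₜ[k] a)

def IsTransposition.intertwiners (hs : IsTransposition k H A s) (f : Module.End k A) :
    Subalgebra k H where
  carrier := {h | ∀ a, s (h ⊗ₜ[k] f a) = f.rTensor H (s (h ⊗ₜ[k] a))}
  mul_mem' {g h} hg hh a := by
    rw [hs.apply_mul_tmul, hs.apply_mul_tmul, hh a]
    induction s (h ⊗ₜ[k] a) using TensorProduct.induction_on with
    | zero => simp
    | tmul c d =>
      simp only [rTensor_tmul, mul'_lTensor_braidPastLeft_tmul, LinearEquiv.coe_coe, hg c]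
      rw [← LinearMap.comp_apply, ← LinearMap.comp_apply, lTensor_comp_rTensor,
        rTensor_comp_lTensor]
    | add u v hu hv => simp only [map_add, hu, hv]
  add_mem' {g h} hg hh a := by simp only [add_tmul, map_add, hg a, hh a]
  algebraMap_mem' r a := by
    rw [Algebra.algebraMap_eq_smul_one, ← smul_tmul', ← smul_tmul', map_smul, map_smul,
      hs.unit_H, hs.unit_H, map_smul, rTensor_tmul]

lemma IsTransposition.apply_units_inv_tmul (hs : IsTransposition k H A s) {u : Hˣ}
    (hu : ∀ a : A, s ((u : H) ⊗ₜ[k] a) = a ⊗ₜ[k] (u : H)) (a : A) :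
    s (((u⁻¹ : Hˣ) : H) ⊗ₜ[k] a) = a ⊗ₜ[k] ((u⁻¹ : Hˣ) : H) := by
  have hmul (t : A ⊗[k] H) : (mul' k H).lTensor A (braidPastLeft s.toLinearMap (u : H) t)
      = (mulLeft k (u : H)).lTensor A t := by
    induction t using TensorProduct.induction_on with
    | zero => simp
    | tmul c d => simp [hu]
    | add t t' ht ht' => simp only [map_add, ht, ht']
  have h := hs.apply_mul_tmul (u : H) ((u⁻¹ : Hˣ) : H) a
  rw [Units.mul_inv, hs.unit_H, hmul] at h
  calc s (((u⁻¹ : Hˣ) : H) ⊗ₜ[k] a)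
      = (mulLeft k ((u⁻¹ : Hˣ) : H)).lTensor A
          ((mulLeft k (u : H)).lTensor A (s (((u⁻¹ : Hˣ) : H) ⊗ₜ[k] a))) := by
        rw [← lTensor_comp_apply, ← mulLeft_mul, Units.inv_mul, mulLeft_one, lTensor_id,
          id_apply]
    _ = a ⊗ₜ[k] ((u⁻¹ : Hˣ) : H) := by rw [← h, lTensor_tmul, mulLeft_apply, mul_one]

end Transposition

section ModuleAlgebra

variable {k : Type*} [Field k] {H : Type*} [Ring H] [HopfAlgebra k H]
  {A : Type*} [Ring A] [Algebra k A] (s : H ⊗[k] A ≃ₗ[k] A ⊗[k] H)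
  (ρ : H →ₐ[k] Module.End k A)

@[simp]
lemma actMap_tmul (h : H) (a : A) : actMap k H A ρ (h ⊗ₜ[k] a) = ρ h a := by
  simp [actMap]

def actPair (u : H) (b : A) : A ⊗[k] H →ₗ[k] A ⊗[k] A :=
  TensorProduct.map (ρ u) (actMap k H A ρ ∘ₗ (TensorProduct.mk k H A).flip b)

@[simp]
lemma actPair_tmul (u : H) (b c : A) (d : H) :
    actPair ρ u b (c ⊗ₜ[k] d) = ρ u c ⊗ₜ[k] ρ d b := by
  simp [actPair]

/-- The right-hand side of `IsModuleAlgebra.mul_act`. -/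
def braidedAct : (H ⊗[k] H) ⊗[k] (A ⊗[k] A) →ₗ[k] A :=
  mul' k A ∘ₗ TensorProduct.map (actMap k H A ρ) (actMap k H A ρ) ∘ₗ midMap s.toLinearMap

lemma braidedAct_tmul (x y : H) (a b : A) :
    braidedAct s ρ ((x ⊗ₜ[k] y) ⊗ₜ[k] (a ⊗ₜ[k] b))
      = mul' k A (actPair ρ x b (s (y ⊗ₜ[k] a))) := by
  simp only [braidedAct, midMap, coe_comp, LinearEquiv.coe_coe, Function.comp_apply,
    assoc_tmul, lTensor_tmul, assoc_symm_tmul, rTensor_tmul]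
  generalize s (y ⊗ₜ[k] a) = t
  induction t using TensorProduct.induction_on with
  | zero => simp
  | tmul c d => simp
  | add t t' ht ht' => simp only [add_tmul, tmul_add, map_add, ht, ht']

variable {s ρ}

lemma braidedAct_tmul_of_apply_eq {x y y' : H} {a a' : A} (b : A)
    (h : s (y ⊗ₜ[k] a) = a' ⊗ₜ[k] y') :
    braidedAct s ρ ((x ⊗ₜ[k] y) ⊗ₜ[k] (a ⊗ₜ[k] b)) = ρ x a' * ρ y' b := by
  simp [braidedAct_tmul, h]

lemma braidedAct_comul_of_isGroupLikeElem {g : H} (hg : IsGroupLikeElem k g)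
    (hgs : ∀ a : A, s (g ⊗ₜ[k] a) = a ⊗ₜ[k] g) (a b : A) :
    braidedAct s ρ (Coalgebra.comul (R := k) g ⊗ₜ[k] (a ⊗ₜ[k] b)) = ρ g a * ρ g b := by
  rw [hg.comul_eq_tmul_self, braidedAct_tmul_of_apply_eq b (hgs a)]

lemma isModuleAlgebra_iff_forall :
    IsModuleAlgebra k H A s ρ ↔
      (∀ (x y : H) (a : A), s (x ⊗ₜ[k] ρ y a) = (ρ y).rTensor H (s (x ⊗ₜ[k] a)))
      ∧ (∀ (h : H) (a b : A),
          ρ h (a * b) = braidedAct s ρ (Coalgebra.comul (R := k) h ⊗ₜ[k] (a ⊗ₜ[k] b)))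
      ∧ ∀ h : H, ρ h 1 = Coalgebra.counit (R := k) h • (1 : A) := by
  have hrhs (y : H) (t : A ⊗[k] H) :
      (actMap k H A ρ).rTensor H ((TensorProduct.assoc k H A H).symm (y ⊗ₜ[k] t))
        = (ρ y).rTensor H t := by
    induction t using TensorProduct.induction_on with
    | zero => simp
    | tmul c d => simp
    | add t t' ht ht' => simp only [tmul_add, map_add, ht, ht']
  have hcompat (x y : H) (a : A) : ((s.toLinearMap ∘ₗ (actMap k H A ρ).lTensor H
        ∘ₗ (TensorProduct.assoc k H H A).toLinearMap) ((y ⊗ₜ[k] x) ⊗ₜ[k] a)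
      = ((actMap k H A ρ).rTensor H
        ∘ₗ (TensorProduct.assoc k H A H).symm.toLinearMap
        ∘ₗ s.toLinearMap.lTensor H
        ∘ₗ (TensorProduct.assoc k H H A).toLinearMap
        ∘ₗ (TensorProduct.comm k H H).toLinearMap.rTensor A) ((y ⊗ₜ[k] x) ⊗ₜ[k] a))
      ↔ s (y ⊗ₜ[k] ρ x a) = (ρ x).rTensor H (s (y ⊗ₜ[k] a)) := by
    simp only [coe_comp, LinearEquiv.coe_coe, Function.comp_apply, rTensor_tmul, comm_tmul,
      assoc_tmul, lTensor_tmul, actMap_tmul, hrhs]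
  refine ⟨fun h => ⟨fun x y a => (hcompat y x a).1 (LinearMap.congr_fun h.compat_s _),
    h.mul_act, h.one_act⟩, fun ⟨hc, hm, ho⟩ => ⟨?_, hm, ho⟩⟩
  exact TensorProduct.ext_threefold fun y x a => (hcompat x y a).2 (hc y x a)

lemma apply_mul'_of_measuring {g : H} (hg : ∀ a b : A,
      ρ g (a * b) = braidedAct s ρ (Coalgebra.comul (R := k) g ⊗ₜ[k] (a ⊗ₜ[k] b)))
    (w : A ⊗[k] A) :
    ρ g (mul' k A w) = braidedAct s ρ (Coalgebra.comul (R := k) g ⊗ₜ[k] w) := by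
  induction w using TensorProduct.induction_on with
  | zero => simp
  | tmul a b => rw [mul'_apply, hg]
  | add w w' hw hw' => simp only [map_add, tmul_add, hw, hw']

lemma braidedAct_tmul_actPair (hs : IsTransposition k H A s)
    (hcomm : ∀ (x y : H) (a : A), s (x ⊗ₜ[k] ρ y a) = (ρ y).rTensor H (s (x ⊗ₜ[k] a)))
    (z : H ⊗[k] H) (u v : H) (a b : A) :
    braidedAct s ρ (z ⊗ₜ[k] actPair ρ u b (s (v ⊗ₜ[k] a)))
      = braidedAct s ρ ((z * (u ⊗ₜ[k] v)) ⊗ₜ[k] (a ⊗ₜ[k] b)) := by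
  induction z using TensorProduct.induction_on with
  | zero => simp
  | tmul p x =>
    rw [Algebra.TensorProduct.tmul_mul_tmul, braidedAct_tmul, hs.apply_mul_tmul]
    generalize s (v ⊗ₜ[k] a) = t
    induction t using TensorProduct.induction_on with
    | zero => simp
    | tmul c d =>
      rw [actPair_tmul, braidedAct_tmul, hcomm, mul'_lTensor_braidPastLeft_tmul]
      generalize s (x ⊗ₜ[k] c) = t'
      induction t' using TensorProduct.induction_on with
      | zero => simp
      | tmul e f => simp
      | add t t' ht ht' => simp only [map_add, ht, ht']
    | add t t' ht ht' => simp only [map_add, tmul_add, ht, ht']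
  | add z z' hz hz' => simp only [add_mul, add_tmul, map_add, hz, hz']

def measuringSubalgebra (hs : IsTransposition k H A s)
    (hcomm : ∀ (x y : H) (a : A), s (x ⊗ₜ[k] ρ y a) = (ρ y).rTensor H (s (x ⊗ₜ[k] a))) :
    Subalgebra k H where
  carrier := {h | ∀ a b : A,
    ρ h (a * b) = braidedAct s ρ (Coalgebra.comul (R := k) h ⊗ₜ[k] (a ⊗ₜ[k] b))}
  mul_mem' {g h} hg hh a b := by
    rw [map_mul ρ, Module.End.mul_apply, hh, Bialgebra.comul_mul]
    induction Coalgebra.comul (R := k) h using TensorProduct.induction_on with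
    | zero => simp
    | tmul u v =>
      rw [braidedAct_tmul, apply_mul'_of_measuring hg, braidedAct_tmul_actPair hs hcomm]
    | add y y' hy hy' => simp only [mul_add, add_tmul, map_add, hy, hy']
  add_mem' {g h} hg hh a b := by
    rw [map_add ρ, LinearMap.add_apply, hg, hh, map_add, add_tmul, map_add]
  algebraMap_mem' r a b := by
    rw [AlgHom.commutes, Module.algebraMap_end_apply, Bialgebra.comul_algebraMap,
      Algebra.algebraMap_eq_smul_one, ← smul_tmul', map_smul, Algebra.TensorProduct.one_def,
      braidedAct_tmul_of_apply_eq b (hs.unit_H a)]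
    simp

variable (ρ) in
def counitSubalgebra : Subalgebra k H where
  carrier := {h | ρ h 1 = Coalgebra.counit (R := k) h • (1 : A)}
  mul_mem' {g h} hg hh := by simp_all [Module.End.mul_apply, mul_comm, smul_smul]
  add_mem' {g h} hg hh := by simp_all [add_smul]
  algebraMap_mem' r := by simp [Algebra.algebraMap_eq_smul_one]

end ModuleAlgebra

namespace HqData

variable {k : Type*} [Field k] {q : k} {H : Type*} [Ring H] [HopfAlgebra k H]
  (hq : HqData k H q)

lemma adjoin_eq_top :
    Algebra.adjoin k {(hq.σ : H), ((hq.σ⁻¹ : Hˣ) : H), hq.D₁, hq.D₂} = ⊤ := by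
  set T := Algebra.adjoin k {(hq.σ : H), ((hq.σ⁻¹ : Hˣ) : H), hq.D₁, hq.D₂}
  have hσ (i : ℤ) : ((hq.σ ^ i : Hˣ) : H) ∈ T := by
    induction i using Int.induction_on with
    | zero => simp [T.one_mem]
    | succ n hn =>
      rw [zpow_add_one, Units.val_mul]
      exact mul_mem hn (Algebra.subset_adjoin (by simp))
    | pred n hn =>
      rw [zpow_sub_one, Units.val_mul]
      exact mul_mem hn (Algebra.subset_adjoin (by simp))
  have hmono (i : ℤ) (j m : ℕ) : ((hq.σ ^ i : Hˣ) : H) * hq.D₁ ^ j * hq.D₂ ^ m ∈ T :=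
    mul_mem (mul_mem (hσ i) (pow_mem (Algebra.subset_adjoin (by simp)) j))
      (pow_mem (Algebra.subset_adjoin (by simp)) m)
  have of_basis {ι : Type} (b : Module.Basis ι k H) (hb : ∀ i, b i ∈ T) : T = ⊤ := by
    refine eq_top_iff.2 fun x _ => ?_
    have hx : x ∈ Submodule.span k (Set.range b) := b.span_eq ▸ Submodule.mem_top
    exact Submodule.span_le (p := Subalgebra.toSubmodule T) |>.2 (Set.range_subset_iff.2 hb) hx
  rcases em (∃ l, 2 ≤ l ∧ IsPrimitiveRoot q l) with ⟨l, hl2, hl⟩ | hgen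
  · obtain ⟨-, -, b, hb⟩ := hq.basis_root l hl2 hl
    exact of_basis b fun ⟨i, j, m⟩ => hb i j m ▸ hmono i j m
  · obtain ⟨b, hb⟩ := hq.basis_generic (by simpa using hgen)
    exact of_basis b fun ⟨i, j, m⟩ => hb i j m ▸ hmono i j m

lemma mem_of_generators_mem {S : Subalgebra k H} (hσ : (hq.σ : H) ∈ S)
    (hσinv : ((hq.σ⁻¹ : Hˣ) : H) ∈ S) (hD₁ : hq.D₁ ∈ S) (hD₂ : hq.D₂ ∈ S) (h : H) :
    h ∈ S := by
  have htop : ⊤ ≤ S := hq.adjoin_eq_top ▸ Algebra.adjoin_le (by simp [Set.insert_subset_iff, *])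
  exact htop Algebra.mem_top

lemma D₁_ne_zero : hq.D₁ ≠ 0 := by
  rcases em (∃ l, 2 ≤ l ∧ IsPrimitiveRoot q l) with ⟨l, hl2, hl⟩ | hgen
  · obtain ⟨-, -, b, hb⟩ := hq.basis_root l hl2 hl
    simpa [hb] using b.ne_zero (0, ⟨1, by omega⟩, ⟨0, by omega⟩)
  · obtain ⟨b, hb⟩ := hq.basis_generic (by simpa using hgen)
    simpa [hb] using b.ne_zero (0, 1, 0)

lemma isGroupLikeElem_σ : IsGroupLikeElem k (hq.σ : H) := ⟨hq.counit_σ, hq.comul_σ⟩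

lemma isGroupLikeElem_σ_inv : IsGroupLikeElem k ((hq.σ⁻¹ : Hˣ) : H) :=
  isGroupLikeElem_unitsInv.2 hq.isGroupLikeElem_σ

variable {A : Type*} [Ring A] [Algebra k A]

lemma commute_of_generators (ρ : H →ₐ[k] Module.End k A) {f : Module.End k A}
    (hσ : Commute f (ρ hq.σ)) (hD₁ : Commute f (ρ hq.D₁)) (hD₂ : Commute f (ρ hq.D₂))
    (h : H) : Commute f (ρ h) := by
  have hmem (x : H) : x ∈ (Subalgebra.centralizer k {f}).comap ρ ↔ Commute f (ρ x) := by
    simp [Subalgebra.mem_centralizer_iff, Commute, SemiconjBy]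
  refine (hmem h).1 (hq.mem_of_generators_mem ((hmem _).2 hσ) ((hmem _).2 ?_)
    ((hmem _).2 hD₁) ((hmem _).2 hD₂) h)
  have hσ' : Commute f (Units.map (ρ : H →* Module.End k A) hq.σ : Module.End k A) := hσ
  simpa using hσ'.units_inv_right

variable {s : H ⊗[k] A ≃ₗ[k] A ⊗[k] H}

lemma transposition_apply_σ_tmul (hs : IsTransposition k H A s) (α : A ≃ₐ[k] A)
    (hα₁ : ∀ a : A, s (hq.D₁ ⊗ₜ[k] a) = α a ⊗ₜ[k] hq.D₁) (a : A) :
    s ((hq.σ : H) ⊗ₜ[k] a) = a ⊗ₜ[k] (hq.σ : H) := by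
  have hcomul := LinearMap.congr_fun hs.comul_compat (hq.D₁ ⊗ₜ[k] a)
  simp only [coe_comp, Function.comp_apply, LinearEquiv.coe_coe, rTensor_tmul, hα₁,
    lTensor_tmul, hq.comul_D₁, add_tmul, map_add, braidPast_tmul, tmul_add] at hcomul
  have hone : braidPastLeft s.toLinearMap (1 : H) (α a ⊗ₜ[k] hq.D₁)
      = α a ⊗ₜ[k] ((1 : H) ⊗ₜ[k] hq.D₁) := by
    simp [hs.unit_H]
  rw [hone, add_left_inj] at hcomul
  refine braidPastLeft_injective s.toLinearMap hq.D₁ (fun b c hbc => ?_) ?_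
  · exact α.injective (tmul_left_injective hq.D₁_ne_zero (by simpa [hα₁] using hbc))
  · simpa [hα₁] using hcomul.symm

lemma forall_mem_intertwiners_iff (hs : IsTransposition k H A s) (α : A ≃ₐ[k] A)
    (hα₁ : ∀ a : A, s (hq.D₁ ⊗ₜ[k] a) = α a ⊗ₜ[k] hq.D₁)
    (hα₂ : ∀ a : A, s (hq.D₂ ⊗ₜ[k] a) = α.symm a ⊗ₜ[k] hq.D₂) (f : Module.End k A) :
    (∀ h, h ∈ hs.intertwiners f) ↔ Commute (α.toLinearMap : Module.End k A) f := by
  refine ⟨fun h => LinearMap.ext fun a => ?_, fun hf => ?_⟩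
  · have hD₁ : s (hq.D₁ ⊗ₜ[k] f a) = f.rTensor H (s (hq.D₁ ⊗ₜ[k] a)) := h hq.D₁ a
    rw [hα₁, hα₁, rTensor_tmul] at hD₁
    exact tmul_left_injective hq.D₁_ne_zero hD₁
  have hfα : ∀ a, α (f a) = f (α a) := LinearMap.congr_fun hf
  have hfα_symm (a : A) : α.symm (f a) = f (α.symm a) :=
    α.injective (by rw [α.apply_symm_apply, hfα, α.apply_symm_apply])
  have hσs := hq.transposition_apply_σ_tmul hs α hα₁
  refine hq.mem_of_generators_mem ?_ ?_ ?_ ?_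
  · intro a; simp [hσs]
  · intro a; simp [hs.apply_units_inv_tmul hσs]
  · intro a; simp [hα₁, hfα]
  · intro a; simp [hα₂, hfα_symm]

variable {ρ : H →ₐ[k] Module.End k A}

lemma braidedAct_comul_D₁ (hs : IsTransposition k H A s) (α : A ≃ₐ[k] A)
    (hα₁ : ∀ a : A, s (hq.D₁ ⊗ₜ[k] a) = α a ⊗ₜ[k] hq.D₁) (a b : A) :
    braidedAct s ρ (Coalgebra.comul (R := k) hq.D₁ ⊗ₜ[k] (a ⊗ₜ[k] b))
      = ρ hq.D₁ a * ρ hq.σ b + α a * ρ hq.D₁ b := by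
  rw [hq.comul_D₁, add_tmul, map_add,
    braidedAct_tmul_of_apply_eq b (hq.transposition_apply_σ_tmul hs α hα₁ a),
    braidedAct_tmul_of_apply_eq b (hα₁ a), map_one, Module.End.one_apply]

lemma braidedAct_comul_D₂ (hs : IsTransposition k H A s) (α : A ≃ₐ[k] A)
    (hα₂ : ∀ a : A, s (hq.D₂ ⊗ₜ[k] a) = α.symm a ⊗ₜ[k] hq.D₂) (a b : A) :
    braidedAct s ρ (Coalgebra.comul (R := k) hq.D₂ ⊗ₜ[k] (a ⊗ₜ[k] b))
      = ρ hq.D₂ a * b + ρ hq.σ (α.symm a) * ρ hq.D₂ b := by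
  rw [hq.comul_D₂, add_tmul, map_add, braidedAct_tmul_of_apply_eq b (hs.unit_H a),
    braidedAct_tmul_of_apply_eq b (hα₂ a), map_one, Module.End.one_apply]

theorem isModuleAlgebra_iff (hs : IsTransposition k H A s) (α : A ≃ₐ[k] A)
    (hα₁ : ∀ a : A, s (hq.D₁ ⊗ₜ[k] a) = α a ⊗ₜ[k] hq.D₁)
    (hα₂ : ∀ a : A, s (hq.D₂ ⊗ₜ[k] a) = α.symm a ⊗ₜ[k] hq.D₂) :
    IsModuleAlgebra k H A s ρ ↔
      ((ρ hq.σ 1 = 1 ∧ ∀ a b : A, ρ hq.σ (a * b) = ρ hq.σ a * ρ hq.σ b)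
        ∧ (∀ a : A, α (ρ hq.D₁ a) = ρ hq.D₁ (α a))
        ∧ (∀ a : A, α (ρ hq.D₂ a) = ρ hq.D₂ (α a))
        ∧ (∀ a : A, α (ρ hq.σ a) = ρ hq.σ (α a))
        ∧ (ρ hq.D₁ 1 = 0 ∧ ρ hq.D₂ 1 = 0)
        ∧ (∀ a b : A, ρ hq.D₁ (a * b) = ρ hq.D₁ a * ρ hq.σ b + α a * ρ hq.D₁ b)
        ∧ (∀ a b : A, ρ hq.D₂ (a * b) = ρ hq.D₂ a * b + ρ hq.σ (α.symm a) * ρ hq.D₂ b)) := by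
  have hσs := hq.transposition_apply_σ_tmul hs α hα₁
  have hintertwines := hq.forall_mem_intertwiners_iff hs α hα₁ hα₂
  rw [isModuleAlgebra_iff_forall]
  constructor
  · rintro ⟨hcomm, hmul, hone⟩
    have hα (h : H) (a : A) : α (ρ h a) = ρ h (α a) :=
      LinearMap.congr_fun ((hintertwines (ρ h)).1 fun x a => hcomm x h a) a
    refine ⟨⟨by simpa [hq.counit_σ] using hone hq.σ, fun a b => (hmul _ a b).trans
      (braidedAct_comul_of_isGroupLikeElem hq.isGroupLikeElem_σ hσs a b)⟩, hα _, hα _, hα _,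
      ⟨by simpa [hq.counit_D₁] using hone hq.D₁, by simpa [hq.counit_D₂] using hone hq.D₂⟩,
      fun a b => (hmul _ a b).trans (hq.braidedAct_comul_D₁ hs α hα₁ a b),
      fun a b => (hmul _ a b).trans (hq.braidedAct_comul_D₂ hs α hα₂ a b)⟩
  · rintro ⟨⟨hσ1, hσmul⟩, hαD₁, hαD₂, hασ, ⟨hD₁1, hD₂1⟩, hD₁mul, hD₂mul⟩
    have hα (h : H) : Commute (α.toLinearMap : Module.End k A) (ρ h) :=
      hq.commute_of_generators ρ (LinearMap.ext hασ) (LinearMap.ext hαD₁)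
        (LinearMap.ext hαD₂) h
    have hcomm (x y : H) (a : A) : s (x ⊗ₜ[k] ρ y a) = (ρ y).rTensor H (s (x ⊗ₜ[k] a)) :=
      (hintertwines (ρ y)).2 (hα y) x a
    have hσσinv (a : A) : ρ hq.σ (ρ ((hq.σ⁻¹ : Hˣ) : H) a) = a := by
      rw [← Module.End.mul_apply, ← map_mul, Units.mul_inv, map_one, Module.End.one_apply]
    have hσinvσ (a : A) : ρ ((hq.σ⁻¹ : Hˣ) : H) (ρ hq.σ a) = a := by
      rw [← Module.End.mul_apply, ← map_mul, Units.inv_mul, map_one, Module.End.one_apply]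
    have hσ_injective : Function.Injective (ρ hq.σ) := fun a b hab => by
      rw [← hσinvσ a, hab, hσinvσ]
    refine ⟨hcomm, fun h => hq.mem_of_generators_mem (S := measuringSubalgebra hs hcomm)
      ?_ ?_ ?_ ?_ h, fun h => hq.mem_of_generators_mem (S := counitSubalgebra ρ) ?_ ?_ ?_ ?_ h⟩
    · exact fun a b => (hσmul a b).trans
        (braidedAct_comul_of_isGroupLikeElem hq.isGroupLikeElem_σ hσs a b).symm
    · intro a b
      rw [braidedAct_comul_of_isGroupLikeElem hq.isGroupLikeElem_σ_inv
        (hs.apply_units_inv_tmul hσs)]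
      apply hσ_injective
      rw [hσmul, hσσinv, hσσinv, hσσinv]
    · exact fun a b => (hD₁mul a b).trans (hq.braidedAct_comul_D₁ hs α hα₁ a b).symm
    · exact fun a b => (hD₂mul a b).trans (hq.braidedAct_comul_D₂ hs α hα₂ a b).symm
    · simp [counitSubalgebra, hσ1, hq.counit_σ]
    · show ρ ((hq.σ⁻¹ : Hˣ) : H) 1 = _
      rw [hq.isGroupLikeElem_σ_inv.counit_eq_one, one_smul]
      exact hσ_injective (by rw [hσσinv, hσ1])
    · simp [counitSubalgebra, hD₁1, hq.counit_D₁]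
    · simp [counitSubalgebra, hD₂1, hq.counit_D₂]

end HqData

end Paper

open Paper in
theorem statement_6_general {k : Type*} [Field k] {q : k}
    {H : Type*} [Ring H] [HopfAlgebra k H] (hq : HqData k H q)
    {A : Type*} [Ring A] [Algebra k A]
    (s : H ⊗[k] A ≃ₗ[k] A ⊗[k] H) (hs : IsTransposition k H A s)
    (α : A ≃ₐ[k] A)
    (hα₁ : ∀ a : A, s (hq.D₁ ⊗ₜ[k] a) = α a ⊗ₜ[k] hq.D₁)
    (hα₂ : ∀ a : A, s (hq.D₂ ⊗ₜ[k] a) = α.symm a ⊗ₜ[k] hq.D₂)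
    (ς δ₁ δ₂ : Module.End k A)
    (ρ : H →ₐ[k] Module.End k A)
    (hρσ : ∀ a : A, ρ (hq.σ : H) a = ς a)
    (hρ₁ : ∀ a : A, ρ hq.D₁ a = δ₁ a)
    (hρ₂ : ∀ a : A, ρ hq.D₂ a = δ₂ a) :
    IsModuleAlgebra k H A s ρ
    ↔ ((Function.Bijective ς ∧ ς 1 = 1 ∧ ∀ a b : A, ς (a * b) = ς a * ς b)
        ∧ (∀ a : A, α (δ₁ a) = δ₁ (α a))
        ∧ (∀ a : A, α (δ₂ a) = δ₂ (α a))
        ∧ (∀ a : A, α (ς a) = ς (α a))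
        ∧ (δ₁ 1 = 0 ∧ δ₂ 1 = 0)
        ∧ (∀ a b : A, δ₁ (a * b) = δ₁ a * ς b + α a * δ₁ b)
        ∧ (∀ a b : A, δ₂ (a * b) = δ₂ a * b + ς (α.symm a) * δ₂ b)) := by
  obtain rfl : ς = ρ hq.σ := (LinearMap.ext hρσ).symm
  obtain rfl : δ₁ = ρ hq.D₁ := (LinearMap.ext hρ₁).symm
  obtain rfl : δ₂ = ρ hq.D₂ := (LinearMap.ext hρ₂).symm
  have hσ_bijective : Function.Bijective (ρ hq.σ) :=
    (Module.End.isUnit_iff _).1 (hq.σ.isUnit.map ρ)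
  rw [hq.isModuleAlgebra_iff hs α hα₁ hα₂, and_iff_right hσ_bijective]

open Paper in
/-- Characterisation of the `H_q`-braided module algebra structures on
`(A, s)` for a good transposition `s` with associated automorphism `α`. -/
theorem statement_6 {k : Type*} [Field k] {q : k} (hq0 : q ≠ 0)
    {H : Type*} [Ring H] [HopfAlgebra k H] (hq : HqData k H q)
    {A : Type*} [Ring A] [Algebra k A]
    (s : H ⊗[k] A ≃ₗ[k] A ⊗[k] H) (hs : IsTransposition k H A s)
    (α : A ≃ₐ[k] A)
    (hα₁ : ∀ a : A, s (hq.D₁ ⊗ₜ[k] a) = α a ⊗ₜ[k] hq.D₁)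
    (hα₂ : ∀ a : A, s (hq.D₂ ⊗ₜ[k] a) = α.symm a ⊗ₜ[k] hq.D₂)
    (ς δ₁ δ₂ : Module.End k A)
    (h1 : Function.Bijective ς)
    (h2 : δ₁ ∘ₗ δ₂ = δ₂ ∘ₗ δ₁)
    (h3₁ : q • (ς ∘ₗ δ₁) = δ₁ ∘ₗ ς) (h3₂ : q • (ς ∘ₗ δ₂) = δ₂ ∘ₗ ς)
    (h4 : ∀ l : ℕ, 2 ≤ l → IsPrimitiveRoot q l → δ₁ ^ l = 0 ∧ δ₂ ^ l = 0)
    (ρ : H →ₐ[k] Module.End k A)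
    (hρσ : ∀ a : A, ρ (hq.σ : H) a = ς a)
    (hρ₁ : ∀ a : A, ρ hq.D₁ a = δ₁ a)
    (hρ₂ : ∀ a : A, ρ hq.D₂ a = δ₂ a) :
    IsModuleAlgebra k H A s ρ
    ↔ ((Function.Bijective ς ∧ ς 1 = 1 ∧ ∀ a b : A, ς (a * b) = ς a * ς b)
        ∧ (∀ a : A, α (δ₁ a) = δ₁ (α a))
        ∧ (∀ a : A, α (δ₂ a) = δ₂ (α a))
        ∧ (∀ a : A, α (ς a) = ς (α a))
        ∧ (δ₁ 1 = 0 ∧ δ₂ 1 = 0)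
        ∧ (∀ a b : A, δ₁ (a * b) = δ₁ a * ς b + α a * δ₁ b)
        ∧ (∀ a b : A, δ₂ (a * b) = δ₂ a * b + ς (α.symm a) * δ₂ b)) :=
  statement_6_general hq s hs α hα₁ hα₂ ς δ₁ δ₂ ρ hρσ hρ₁ hρ₂
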